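/- arXiv:2605.04302 — 2 statements merged into one kernel-verified Lean document; each statement's English description precedes it below -/
import Mathlib

section
/- Let D ≥ 2 and m ≥ 1 be integers and r ≥ 1. Define q̂(X) = (Σ_{i=1}^r X_i^{D-m}) / (Σ_{i=1}^r X_i^{D-1}) on the standard simplex Δ^{r-1} = {X ∈ ℝ^r : Σ X_i = 1, X_i ≥ 0} (restricted to points where the denominator is nonzero, i.e. X ≠ 0, which always holds on the simplex). If 1 ≤ m ≤ D-1, then the supremum of q̂ over Δ^{r-1} equals r^{m-1}, attained at the barycenter X = (1/r, …, 1/r). -/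
open Finset

/-!
On the simplex `∑ Xᵢ = 1`, Chebyshev's sum inequality for the similarly ordered sequences `Xᵢ`
and `Xᵢ ^ a` reads `∑ Xᵢ ^ a ≤ r ∑ Xᵢ ^ (a + 1)`. Iterating it `m - 1` times from `a = D - m`
bounds the ratio by `r ^ (m - 1)`, and the barycenter attains this value.
-/

section PowerSums

variable {ι : Type*} [Fintype ι] {X : ι → ℝ}

lemma sum_mul_sum_pow_le_card_mul_sum_pow_succ (hX : ∀ i, 0 ≤ X i) (a : ℕ) :
    (∑ i, X i) * ∑ i, X i ^ a ≤ Fintype.card ι * ∑ i, X i ^ (a + 1) := by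
  have := ((monovary_self X).pow_right₀ hX a).sum_mul_sum_le_card_mul_sum
  simpa only [Pi.pow_apply, pow_succ'] using this

lemma sum_pow_le_card_pow_mul_sum_pow_add (hX : ∀ i, 0 ≤ X i) (hs : ∑ i, X i = 1) (a c : ℕ) :
    ∑ i, X i ^ a ≤ (Fintype.card ι : ℝ) ^ c * ∑ i, X i ^ (a + c) := by
  induction c with
  | zero => simp
  | succ c ih =>
    calc ∑ i, X i ^ a ≤ (Fintype.card ι : ℝ) ^ c * ∑ i, X i ^ (a + c) := ih
      _ ≤ (Fintype.card ι : ℝ) ^ c * (Fintype.card ι * ∑ i, X i ^ (a + c + 1)) := by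
          gcongr
          simpa only [hs, one_mul] using sum_mul_sum_pow_le_card_mul_sum_pow_succ hX (a + c)
      _ = (Fintype.card ι : ℝ) ^ (c + 1) * ∑ i, X i ^ (a + (c + 1)) := by
          rw [pow_succ, ← add_assoc, mul_assoc]

lemma sum_pow_pos (hX : ∀ i, 0 ≤ X i) (hpos : 0 < ∑ i, X i) (n : ℕ) : 0 < ∑ i, X i ^ n := by
  obtain ⟨i, -, hi⟩ := (sum_pos_iff_of_nonneg fun i _ => hX i).mp hpos
  exact sum_pos' (fun j _ => pow_nonneg (hX j) n) ⟨i, mem_univ i, pow_pos hi n⟩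

end PowerSums

theorem simplex_sup_ratio_general (D m r : ℕ) (hm : 1 ≤ m) (hmD : m ≤ D - 1)
    (hr : 1 ≤ r) :
    IsGreatest
      {y : ℝ | ∃ X : Fin r → ℝ, (∀ i, 0 ≤ X i) ∧ (∑ i, X i = 1) ∧
        y = (∑ i, X i ^ (D - m)) / (∑ i, X i ^ (D - 1))}
      ((r : ℝ) ^ (m - 1)) ∧
    (∑ i : Fin r, ((r : ℝ)⁻¹) ^ (D - m)) / (∑ i : Fin r, ((r : ℝ)⁻¹) ^ (D - 1))
      = (r : ℝ) ^ (m - 1) := by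
  have hsplit : D - 1 = D - m + (m - 1) := by omega
  have hr0 : (r : ℝ) ≠ 0 := Nat.cast_ne_zero.mpr (by omega)
  have hbary : (∑ i : Fin r, ((r : ℝ)⁻¹) ^ (D - m)) / (∑ i : Fin r, ((r : ℝ)⁻¹) ^ (D - 1))
      = (r : ℝ) ^ (m - 1) := by
    simp only [sum_const, card_univ, Fintype.card_fin, nsmul_eq_mul, hsplit, pow_add, inv_pow]
    field_simp
  refine ⟨⟨⟨fun _ => (r : ℝ)⁻¹, fun _ => by positivity, by simp [hr0], hbary.symm⟩, ?_⟩, hbary⟩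
  rintro y ⟨X, hX, hs, rfl⟩
  rw [div_le_iff₀ (sum_pow_pos hX (hs ▸ one_pos) _), hsplit]
  simpa only [Fintype.card_fin] using sum_pow_le_card_pow_mul_sum_pow_add hX hs (D - m) (m - 1)

/-- For integers `D ≥ 2`, `1 ≤ m ≤ D-1`, `r ≥ 1`, the function
`q̂(X) = (Σ X_i^{D-m}) / (Σ X_i^{D-1})` attains its supremum `r^{m-1}` over
the standard simplex, at the barycenter `X = (1/r,…,1/r)`. -/
theorem simplex_sup_ratio (D m r : ℕ) (hD : 2 ≤ D) (hm : 1 ≤ m) (hmD : m ≤ D - 1)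
    (hr : 1 ≤ r) :
    IsGreatest
      {y : ℝ | ∃ X : Fin r → ℝ, (∀ i, 0 ≤ X i) ∧ (∑ i, X i = 1) ∧
        y = (∑ i, X i ^ (D - m)) / (∑ i, X i ^ (D - 1))}
      ((r : ℝ) ^ (m - 1)) ∧
    (∑ i : Fin r, ((r : ℝ)⁻¹) ^ (D - m)) / (∑ i : Fin r, ((r : ℝ)⁻¹) ^ (D - 1))
      = (r : ℝ) ^ (m - 1) :=
  simplex_sup_ratio_general D m r hm hmD hr
end

section
/- For n ≥ 1 and D ≥ 2 integers, define M_k := (π/(n D²)) · C(D,k)² · (n+k+1)^k for 2 ≤ k ≤ D. Then (M_k)^{1/(k-1)} ≤ M_2 for all 2 ≤ k ≤ D, where M_2 = π(D-1)²(n+3)²/(4n). -/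
open Finset Real


lemma aux_pow3 (m k : ℕ) (hk : k ≤ m) : ((m:ℝ)+1)^k ≤ 3 * (m:ℝ)^k := by
  rcases Nat.eq_zero_or_pos m with hm | hm
  · subst hm; interval_cases k; norm_num
  · have hm' : (0:ℝ) < m := by exact_mod_cast hm
    have h1 : ((m:ℝ)+1) = (m:ℝ) * (1 + 1/m) := by field_simp
    have h2 : (1 + 1/(m:ℝ))^k ≤ 3 := by
      have e1 : (1:ℝ) + 1/m ≤ Real.exp (1/m) := by
        have := Real.add_one_le_exp (1/(m:ℝ)); linarith
      have e2 : (1 + 1/(m:ℝ))^k ≤ Real.exp (1/m) ^ k :=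
        pow_le_pow_left₀ (by positivity) e1 k
      have e3 : Real.exp (1/(m:ℝ)) ^ k = Real.exp (k / m) := by
        rw [← Real.exp_nat_mul]; ring_nf
      have e4 : Real.exp ((k:ℝ) / m) ≤ Real.exp 1 := by
        apply Real.exp_le_exp.2
        rw [div_le_one hm']; exact_mod_cast hk
      have e5 : Real.exp 1 ≤ 3 := by
        have := Real.exp_one_lt_d9; linarith
      calc (1 + 1/(m:ℝ))^k ≤ Real.exp (1/m) ^ k := e2
        _ = Real.exp (k/m) := e3
        _ ≤ Real.exp 1 := e4
        _ ≤ 3 := e5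
    calc ((m:ℝ)+1)^k = (m:ℝ)^k * (1+1/m)^k := by rw [h1, mul_pow]
      _ ≤ (m:ℝ)^k * 3 := mul_le_mul_of_nonneg_left h2 (by positivity)
      _ = 3 * (m:ℝ)^k := by ring

lemma choose_two_real (D : ℕ) (hD : 1 ≤ D) : (D.choose 2 : ℝ) = (D:ℝ) * ((D:ℝ)-1) / 2 := by
  have h : D.choose 2 * 2 = D * (D-1) := by
    rw [Nat.choose_two_right]
    apply Nat.div_mul_cancel
    rw [mul_comm]
    have : Even ((D-1) * (D-1+1)) := Nat.even_mul_succ_self (D-1)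
    rw [Nat.sub_add_cancel hD] at this
    exact this.two_dvd
  have h' : (D.choose 2 : ℝ) * 2 = (D:ℝ) * ((D:ℝ)-1) := by
    have := congrArg (Nat.cast : ℕ → ℝ) h
    push_cast [Nat.cast_sub hD] at this
    linarith
  linarith

lemma choose_succ_real (D k : ℕ) (hkD : k ≤ D) :
    (D.choose (k+1) : ℝ) = (D.choose k : ℝ) * ((D:ℝ) - (k:ℝ)) / ((k:ℝ)+1) := by
  have h := Nat.choose_succ_right_eq D k
  have h' : (D.choose (k+1) : ℝ) * ((k:ℝ)+1) = (D.choose k : ℝ) * ((D:ℝ) - (k:ℝ)) := by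
    have := congrArg (Nat.cast : ℕ → ℝ) h
    push_cast [Nat.cast_sub hkD] at this
    linarith
  field_simp
  linarith



lemma step_lem (n D k : ℕ) (hn : 1 ≤ n) (hk : 2 ≤ k) (hkD : k + 1 ≤ D) :
    Real.pi / ((n : ℝ) * (D : ℝ) ^ 2) * (D.choose (k+1) : ℝ) ^ 2 *
        ((n : ℝ) + ((k : ℝ) + 1) + 1) ^ (k+1)
      ≤ (Real.pi * ((D : ℝ) - 1) ^ 2 * ((n : ℝ) + 3) ^ 2 / (4 * (n : ℝ))) *
        (Real.pi / ((n : ℝ) * (D : ℝ) ^ 2) * (D.choose k : ℝ) ^ 2 * ((n : ℝ) + (k : ℝ) + 1) ^ k) := by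
  have hn' : (1:ℝ) ≤ n := by exact_mod_cast hn
  have hk' : (2:ℝ) ≤ k := by exact_mod_cast hk
  have hkD' : (k:ℝ) + 1 ≤ D := by exact_mod_cast hkD
  have hc := choose_succ_real D k (by omega)
  -- pow bound
  have hpow : ((n:ℝ)+(k:ℝ)+2)^(k+1) ≤ 3 * (((n:ℝ)+(k:ℝ)+2) * ((n:ℝ)+(k:ℝ)+1)^k) := by
    have h := aux_pow3 (n+k+1) k (by omega)
    push_cast at h
    have hb : ((n:ℝ)+(k:ℝ)+2)^k ≤ 3*((n:ℝ)+(k:ℝ)+1)^k := by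
      rw [show ((n:ℝ)+(k:ℝ)+2) = (n:ℝ)+(k:ℝ)+1+1 by ring]
      convert h using 3 <;> ring
    calc ((n:ℝ)+(k:ℝ)+2)^(k+1) = ((n:ℝ)+(k:ℝ)+2)^k * ((n:ℝ)+(k:ℝ)+2) := by ring
      _ ≤ (3*((n:ℝ)+(k:ℝ)+1)^k) * ((n:ℝ)+(k:ℝ)+2) :=
          mul_le_mul_of_nonneg_right hb (by positivity)
      _ = 3 * (((n:ℝ)+(k:ℝ)+2) * ((n:ℝ)+(k:ℝ)+1)^k) := by ring
  -- scalar key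
  have key : 3 * ((n:ℝ)+(k:ℝ)+2) / ((k:ℝ)+1)^2 ≤ Real.pi * ((n:ℝ)+3)^2 / (4*(n:ℝ)) := by
    rw [div_le_div_iff₀ (by positivity) (by positivity)]
    have hπ := Real.pi_gt_three
    have h1 : 4*(n:ℝ)*((n:ℝ)+(k:ℝ)+2) ≤ ((n:ℝ)+3)^2*((k:ℝ)+1)^2 := by
      nlinarith [mul_nonneg (sub_nonneg.2 hn') (sub_nonneg.2 hk'), sq_nonneg ((n:ℝ)-(k:ℝ)), sq_nonneg ((n:ℝ)-3)]
    have h2 : 3*(((n:ℝ)+3)^2*((k:ℝ)+1)^2) ≤ Real.pi * (((n:ℝ)+3)^2*((k:ℝ)+1)^2) := by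
      nlinarith [sq_nonneg (((n:ℝ)+3)*((k:ℝ)+1))]
    nlinarith [h1, h2]
  -- squares
  have hsq : ((D:ℝ)-(k:ℝ))^2 ≤ ((D:ℝ)-1)^2 := by nlinarith
  have key2 := mul_le_mul_of_nonneg_right key
    (show (0:ℝ) ≤ ((D:ℝ)-1)^2 * ((n:ℝ)+(k:ℝ)+1)^k by positivity)
  have hS : ((D:ℝ)-(k:ℝ))^2 / ((k:ℝ)+1)^2 * ((n:ℝ)+(k:ℝ)+2)^(k+1)
      ≤ Real.pi * ((D:ℝ)-1)^2 * ((n:ℝ)+3)^2 / (4*(n:ℝ)) * ((n:ℝ)+(k:ℝ)+1)^k := by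
    calc ((D:ℝ)-(k:ℝ))^2 / ((k:ℝ)+1)^2 * ((n:ℝ)+(k:ℝ)+2)^(k+1)
        ≤ ((D:ℝ)-1)^2 / ((k:ℝ)+1)^2 * (3 * (((n:ℝ)+(k:ℝ)+2) * ((n:ℝ)+(k:ℝ)+1)^k)) := by
          apply mul_le_mul _ hpow (by positivity) (by positivity)
          gcongr

      _ = (3*((n:ℝ)+(k:ℝ)+2)/((k:ℝ)+1)^2) * (((D:ℝ)-1)^2 * ((n:ℝ)+(k:ℝ)+1)^k) := by ring
      _ ≤ (Real.pi*((n:ℝ)+3)^2/(4*(n:ℝ))) * (((D:ℝ)-1)^2 * ((n:ℝ)+(k:ℝ)+1)^k) := key2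
      _ = Real.pi * ((D:ℝ)-1)^2 * ((n:ℝ)+3)^2 / (4*(n:ℝ)) * ((n:ℝ)+(k:ℝ)+1)^k := by ring
  have hA : (0:ℝ) ≤ Real.pi / ((n:ℝ)*(D:ℝ)^2) * (D.choose k : ℝ)^2 := by positivity
  calc Real.pi / ((n:ℝ)*(D:ℝ)^2) * (D.choose (k+1) : ℝ)^2 * ((n:ℝ)+((k:ℝ)+1)+1)^(k+1)
      = (Real.pi / ((n:ℝ)*(D:ℝ)^2) * (D.choose k : ℝ)^2) *
        (((D:ℝ)-(k:ℝ))^2/((k:ℝ)+1)^2 * ((n:ℝ)+(k:ℝ)+2)^(k+1)) := by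
        rw [hc]; rw [show (n:ℝ)+((k:ℝ)+1)+1 = (n:ℝ)+(k:ℝ)+2 by ring]
        have hk1 : ((k:ℝ)+1) ≠ 0 := by positivity
        field_simp
    _ ≤ (Real.pi / ((n:ℝ)*(D:ℝ)^2) * (D.choose k : ℝ)^2) *
        (Real.pi * ((D:ℝ)-1)^2 * ((n:ℝ)+3)^2 / (4*(n:ℝ)) * ((n:ℝ)+(k:ℝ)+1)^k) :=
        mul_le_mul_of_nonneg_left hS hA
    _ = (Real.pi * ((D:ℝ)-1)^2 * ((n:ℝ)+3)^2 / (4*(n:ℝ))) *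
        (Real.pi / ((n:ℝ)*(D:ℝ)^2) * (D.choose k : ℝ)^2 * ((n:ℝ)+(k:ℝ)+1)^k) := by ring



lemma Mk_le_pow (n D : ℕ) (hn : 1 ≤ n) (hD : 2 ≤ D) :
    ∀ k, 2 ≤ k → k ≤ D →
    Real.pi / ((n : ℝ) * (D : ℝ) ^ 2) * (D.choose k : ℝ) ^ 2 * ((n : ℝ) + (k : ℝ) + 1) ^ k
      ≤ (Real.pi * ((D : ℝ) - 1) ^ 2 * ((n : ℝ) + 3) ^ 2 / (4 * (n : ℝ))) ^ (k - 1) := by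
  intro k hk
  induction k, hk using Nat.le_induction with
  | base =>
    intro _
    have hn0 : (n:ℝ) ≠ 0 := by positivity
    have hD0 : (D:ℝ) ≠ 0 := by
      have : (2:ℝ) ≤ D := by exact_mod_cast hD
      positivity
    apply le_of_eq
    rw [choose_two_real D (by omega)]
    push_cast
    norm_num
    field_simp
    ring
  | succ k hk2 ih =>
    intro hkD
    have ihk := ih (by omega)
    have hM2 : (0:ℝ) ≤ Real.pi * ((D : ℝ) - 1) ^ 2 * ((n : ℝ) + 3) ^ 2 / (4 * (n : ℝ)) := by
      have := Real.pi_pos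
      positivity
    have h1 := step_lem n D k hn hk2 hkD
    have h2 := mul_le_mul_of_nonneg_left ihk hM2
    have hpows : (Real.pi * ((D : ℝ) - 1) ^ 2 * ((n : ℝ) + 3) ^ 2 / (4 * (n : ℝ))) *
        (Real.pi * ((D : ℝ) - 1) ^ 2 * ((n : ℝ) + 3) ^ 2 / (4 * (n : ℝ))) ^ (k - 1)
        = (Real.pi * ((D : ℝ) - 1) ^ 2 * ((n : ℝ) + 3) ^ 2 / (4 * (n : ℝ))) ^ (k + 1 - 1) := by
      rw [← pow_succ']
      congr 1
      omega
    push_cast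
    calc Real.pi / ((n : ℝ) * (D : ℝ) ^ 2) * (D.choose (k+1) : ℝ) ^ 2 *
          ((n : ℝ) + ((k : ℝ) + 1) + 1) ^ (k+1)
        ≤ (Real.pi * ((D : ℝ) - 1) ^ 2 * ((n : ℝ) + 3) ^ 2 / (4 * (n : ℝ))) *
          (Real.pi / ((n : ℝ) * (D : ℝ) ^ 2) * (D.choose k : ℝ) ^ 2 * ((n : ℝ) + (k : ℝ) + 1) ^ k) := h1
      _ ≤ (Real.pi * ((D : ℝ) - 1) ^ 2 * ((n : ℝ) + 3) ^ 2 / (4 * (n : ℝ))) *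
          (Real.pi * ((D : ℝ) - 1) ^ 2 * ((n : ℝ) + 3) ^ 2 / (4 * (n : ℝ))) ^ (k - 1) := h2
      _ = _ := hpows

/-- For `n ≥ 1`, `D ≥ 2`, with `M_k = (π/(nD²))·C(D,k)²·(n+k+1)^k`, we have
`(M_k)^{1/(k-1)} ≤ M_2 = π(D-1)²(n+3)²/(4n)` for all `2 ≤ k ≤ D`. -/
theorem Mk_rpow_le_M2 (n D : ℕ) (hn : 1 ≤ n) (hD : 2 ≤ D) (k : ℕ) (hk : 2 ≤ k)
    (hkD : k ≤ D) :
    (Real.pi / ((n : ℝ) * (D : ℝ) ^ 2) * (D.choose k : ℝ) ^ 2 *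
        ((n : ℝ) + (k : ℝ) + 1) ^ k) ^ (((k : ℝ) - 1)⁻¹)
      ≤ Real.pi * ((D : ℝ) - 1) ^ 2 * ((n : ℝ) + 3) ^ 2 / (4 * (n : ℝ)) := by
  have hn' : (1:ℝ) ≤ n := by exact_mod_cast hn
  have hD' : (2:ℝ) ≤ D := by exact_mod_cast hD
  have hk' : (2:ℝ) ≤ k := by exact_mod_cast hk
  set M2 := Real.pi * ((D : ℝ) - 1) ^ 2 * ((n : ℝ) + 3) ^ 2 / (4 * (n : ℝ)) with hM2def
  have hM2nn : (0:ℝ) ≤ M2 := by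
    have := Real.pi_pos; rw [hM2def]; positivity
  have hM2one : (1:ℝ) ≤ M2 := by
    rw [hM2def, le_div_iff₀ (by positivity)]
    have hπ := Real.pi_gt_three
    have e2 : 4*(n:ℝ) ≤ ((n:ℝ)+3)^2 := by nlinarith [sq_nonneg ((n:ℝ)-3), sq_nonneg (n:ℝ)]
    have e1 : (1:ℝ) ≤ ((D:ℝ)-1)^2 := by nlinarith
    nlinarith [mul_le_mul e1 e2 (by positivity) (by positivity),
      mul_nonneg (mul_nonneg (le_of_lt (by linarith : (0:ℝ) < Real.pi - 3))
        (sq_nonneg ((D:ℝ)-1))) (sq_nonneg ((n:ℝ)+3)),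
      mul_le_mul_of_nonneg_left e2 (by positivity : (0:ℝ) ≤ ((D:ℝ)-1)^2)]
  have hx0 : (0:ℝ) ≤ Real.pi / ((n : ℝ) * (D : ℝ) ^ 2) * (D.choose k : ℝ) ^ 2 *
      ((n : ℝ) + (k : ℝ) + 1) ^ k := by
    have := Real.pi_pos; positivity
  have hMle := Mk_le_pow n D hn hD k hk hkD
  have hinv : (0:ℝ) ≤ ((k:ℝ) - 1)⁻¹ := by
    apply inv_nonneg.2; linarith
  have h := Real.rpow_le_rpow hx0 hMle hinv
  have hcast : ((k-1 : ℕ):ℝ) = (k:ℝ) - 1 := by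
    push_cast [Nat.cast_sub (by omega : 1 ≤ k)]; ring
  rw [← Real.rpow_natCast M2 (k-1), ← Real.rpow_mul hM2nn, hcast,
    mul_inv_cancel₀ (by linarith : (k:ℝ) - 1 ≠ 0), Real.rpow_one] at h
  exact h
end
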